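/- arXiv:2505.04372 — 2 statements merged into one kernel-verified Lean document; each statement's English description precedes it below -/
import Mathlib

section
/- Let E : [0,∞) → ℝ be nonnegative and suppose that for every nonnegative C¹ test function ψ with compact support in [0,∞) we have -∫₀^∞ ψ'(t) E(t) dt + λ ∫₀^∞ ψ(t) E(t) dt ≤ ψ(0) E(0), where λ > 0 and E is continuous. Then E(τ) ≤ exp(-λτ) E(0) for all τ ≥ 0. -/
open MeasureTheory Filter Set Topology
open scoped ContDiff

/-!
Test against `ψ t = exp (lam * t) * η t`, where `η` is a smooth step falling from `1` to `0` on
`[τ, b]`: since `-ψ' + lam * ψ = -η' * exp (lam * t)`, the hypothesis becomes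
`∫ (-η') * exp (lam * t) * E ≤ E 0`. The weight `-η' ≥ 0` has unit mass on `[τ, b]`, so the left
side is at least the minimum of `exp (lam * t) * E t` over `[τ, b]`, which tends to
`exp (lam * τ) * E τ` as `b → τ`. Compact support of `ψ` is recovered by a second cutoff to the left
of `0`, which does not change the hypothesis since only `ψ` near `[0, ∞)` enters it.
-/

theorem exists_contDiff_antitone_eq_one_of_le_eq_zero_of_ge {a b : ℝ} (hab : a < b) :
    ∃ η : ℝ → ℝ, ContDiff ℝ ∞ η ∧ Antitone η ∧ (∀ t, η t ∈ Icc 0 1) ∧ (∀ t ≤ a, η t = 1) ∧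
      ∀ t, b ≤ t → η t = 0 := by
  have hba : 0 < b - a := sub_pos.2 hab
  refine ⟨fun t => Real.smoothTransition ((b - t) / (b - a)), by fun_prop,
    fun s t hst => Real.smoothTransition.monotone (by gcongr),
    fun t => ⟨Real.smoothTransition.nonneg _, Real.smoothTransition.le_one _⟩,
    fun t ht => ?_, fun t ht => ?_⟩
  · exact Real.smoothTransition.one_of_one_le ((one_le_div hba).2 (by linarith))
  · exact Real.smoothTransition.zero_of_nonpos (div_nonpos_of_nonpos_of_nonneg (by linarith) hba.le)

theorem Continuous.integrableOn_Ici_of_forall_gt_eq_zero {F : Type*} [NormedAddCommGroup F]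
    {f : ℝ → F} (hf : Continuous f) {b : ℝ} (hb : ∀ t, b < t → f t = 0) (a : ℝ) :
    IntegrableOn f (Ici a) := by
  have hzero : IntegrableOn f (Ioi b) :=
    integrableOn_zero.congr_fun (fun t ht => (hb t ht).symm) measurableSet_Ioi
  refine ((hf.integrableOn_Icc (a := a) (b := b)).union hzero).mono_set fun t ht => ?_
  exact (le_or_gt t b).imp (fun htb => ⟨ht, htb⟩) id

theorem deriv_eq_zero_of_notMem_Icc {η : ℝ → ℝ} {a b : ℝ}
    (hη₁ : ∀ t ≤ a, η t = 1) (hη₀ : ∀ t, b ≤ t → η t = 0) {t : ℝ} (ht : t ∉ Icc a b) :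
    deriv η t = 0 := by
  rcases not_and_or.1 ht with hta | htb
  · have : η =ᶠ[𝓝 t] fun _ => 1 :=
      eventually_of_mem (Iio_mem_nhds (not_le.1 hta)) fun s hs => hη₁ s (le_of_lt hs)
    rw [this.deriv_eq, deriv_const]
  · have : η =ᶠ[𝓝 t] fun _ => 0 :=
      eventually_of_mem (Ioi_mem_nhds (not_le.1 htb)) fun s hs => hη₀ s (le_of_lt hs)
    rw [this.deriv_eq, deriv_const]

theorem le_integral_Ici_neg_deriv_mul {η F : ℝ → ℝ} {a b m : ℝ} (ha : 0 ≤ a)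
    (hηC : ContDiff ℝ 1 η) (hη : Antitone η) (hη₁ : ∀ t ≤ a, η t = 1)
    (hη₀ : ∀ t, b ≤ t → η t = 0) (hF : Continuous F) (hm : ∀ t ∈ Icc a b, m ≤ F t) :
    m ≤ ∫ t in Ici 0, -deriv η t * F t := by
  have hderiv_zero : ∀ t ∉ Icc a b, deriv η t = 0 := fun t ht =>
    deriv_eq_zero_of_notMem_Icc hη₁ hη₀ ht
  have hderiv_cont : Continuous (deriv η) := hηC.continuous_deriv le_rfl
  have hvanish : ∀ t, b < t → deriv η t = 0 := fun t ht =>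
    hderiv_zero t fun h => (not_le.2 ht) h.2
  have hmass : ∫ t in Ici 0, -deriv η t = 1 := by
    have hlim : Tendsto η atTop (𝓝 0) :=
      tendsto_const_nhds.congr' (eventually_ge_atTop b |>.mono fun t ht => (hη₀ t ht).symm)
    rw [integral_Ici_eq_integral_Ioi, integral_neg,
      integral_Ioi_of_hasDerivAt_of_nonpos'
        (fun t _ => (hηC.differentiable one_ne_zero t).hasDerivAt) (fun t _ => hη.deriv_nonpos) hlim,
      hη₁ 0 ha]
    ring
  calc m = ∫ t in Ici 0, m * -deriv η t := by rw [integral_const_mul, hmass, mul_one]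
    _ ≤ ∫ t in Ici 0, -deriv η t * F t := by
      refine setIntegral_mono_on ((hderiv_cont.neg.integrableOn_Ici_of_forall_gt_eq_zero
          (fun t (ht : b < t) => by simp [hvanish t ht]) 0).const_mul m)
        ((hderiv_cont.neg.mul hF).integrableOn_Ici_of_forall_gt_eq_zero
          (fun t (ht : b < t) => by simp [hvanish t ht]) 0) measurableSet_Ici fun t _ => ?_
      by_cases ht : t ∈ Icc a b
      · rw [mul_comm]
        exact mul_le_mul_of_nonneg_left (hm t ht) (neg_nonneg.2 hη.deriv_nonpos)
      · simp [hderiv_zero t ht]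

/-- The left-hand side of the weak form of `E' + lam * E ≤ 0` on `[0, ∞)`, tested against `ψ`. -/
noncomputable def decayForm (lam : ℝ) (E ψ : ℝ → ℝ) : ℝ :=
  (-∫ t in Ici (0:ℝ), deriv ψ t * E t) + lam * ∫ t in Ici (0:ℝ), ψ t * E t

theorem decayForm_exp_mul {E η : ℝ → ℝ} {lam b : ℝ} (hE : Continuous E) (hηC : ContDiff ℝ 1 η)
    (hη₀ : ∀ t, b ≤ t → η t = 0) :
    decayForm lam E (fun t => Real.exp (lam * t) * η t) =
      ∫ t in Ici 0, -deriv η t * (Real.exp (lam * t) * E t) := by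
  set ψ : ℝ → ℝ := fun t => Real.exp (lam * t) * η t
  have hψC : ContDiff ℝ 1 ψ := by fun_prop
  have hψ₀ : ∀ t, b < t → ψ t = 0 := fun t ht => by simp [ψ, hη₀ t ht.le]
  have hderiv : ∀ t, deriv ψ t = lam * ψ t + Real.exp (lam * t) * deriv η t := fun t => by
    have hexp : HasDerivAt (fun s => Real.exp (lam * s)) (Real.exp (lam * t) * lam) t := by
      simpa using ((hasDerivAt_id t).const_mul lam).exp
    have hψ' : HasDerivAt ψ _ t := hexp.mul (hηC.differentiable one_ne_zero t).hasDerivAt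
    rw [hψ'.deriv]
    ring
  have hdψ₀ : ∀ t, b < t → deriv ψ t = 0 := fun t ht => by
    have : ψ =ᶠ[𝓝 t] fun _ => 0 := eventually_of_mem (Ioi_mem_nhds ht) hψ₀
    rw [this.deriv_eq, deriv_const]
  unfold decayForm
  rw [← integral_const_mul, ← integral_neg, ← integral_add]
  · refine setIntegral_congr_fun measurableSet_Ici fun t _ => ?_
    simp only [hderiv]
    ring
  · exact ((hψC.continuous_deriv le_rfl).mul hE).neg.integrableOn_Ici_of_forall_gt_eq_zero
      (fun t (ht : b < t) => by simp [hdψ₀ t ht]) 0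
  · exact ((hψC.continuous.mul hE).const_mul lam).integrableOn_Ici_of_forall_gt_eq_zero
      (fun t (ht : b < t) => by simp [hψ₀ t ht]) 0

theorem decayForm_le_of_forall_ge_eq_zero {E : ℝ → ℝ} {lam : ℝ}
    (h : ∀ ψ : ℝ → ℝ, ContDiff ℝ 1 ψ → HasCompactSupport ψ → (∀ t, 0 ≤ ψ t) →
      decayForm lam E ψ ≤ ψ 0 * E 0)
    {ψ : ℝ → ℝ} {b : ℝ} (hψC : ContDiff ℝ 1 ψ) (hψ : ∀ t, 0 ≤ ψ t)
    (hψ₀ : ∀ t, b ≤ t → ψ t = 0) :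
    decayForm lam E ψ ≤ ψ 0 * E 0 := by
  obtain ⟨η, hηC, -, hη, hη₁, hη₀⟩ :=
    exists_contDiff_antitone_eq_one_of_le_eq_zero_of_ge (show (-2 : ℝ) < -1 by norm_num)
  set φ : ℝ → ℝ := fun t => (1 - η t) * ψ t
  have hφψ : ∀ t, -1 ≤ t → φ t = ψ t := fun t ht => by simp [φ, hη₀ t ht]
  have hderiv : ∀ t ∈ Ici (0 : ℝ), deriv φ t = deriv ψ t := fun t ht =>
    Filter.EventuallyEq.deriv_eq <| eventually_of_mem
      (Ioi_mem_nhds (by linarith [ht.out] : (-1 : ℝ) < t)) fun s hs => hφψ s (le_of_lt hs)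
  have hform : decayForm lam E φ = decayForm lam E ψ := by
    have hderiv_int : ∫ t in Ici 0, deriv φ t * E t = ∫ t in Ici 0, deriv ψ t * E t :=
      setIntegral_congr_fun measurableSet_Ici fun t ht => by rw [hderiv t ht]
    have hint : ∫ t in Ici 0, φ t * E t = ∫ t in Ici 0, ψ t * E t :=
      setIntegral_congr_fun measurableSet_Ici fun t ht => by rw [hφψ t (by linarith [ht.out])]
    simp only [decayForm, hderiv_int, hint]
  have hφC : ContDiff ℝ 1 φ := (contDiff_const.sub (hηC.of_le (by simp))).mul hψC
  have hφ_supp : HasCompactSupport φ := HasCompactSupport.intro (isCompact_Icc (a := -2) (b := b))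
    fun t ht => by
      rcases not_and_or.1 ht with ht | ht
      · simp [φ, hη₁ t (not_le.1 ht).le]
      · simp [φ, hψ₀ t (not_le.1 ht).le]
  have hφ_nonneg : ∀ t, 0 ≤ φ t := fun t => mul_nonneg (sub_nonneg.2 (hη t).2) (hψ t)
  simpa only [hform, hφψ 0 (by norm_num)] using h φ hφC hφ_supp hφ_nonneg

theorem energy_exponential_decay_general (E : ℝ → ℝ) (lam : ℝ)
    (hEc : Continuous E)
    (h : ∀ ψ : ℝ → ℝ, ContDiff ℝ 1 ψ → HasCompactSupport ψ → (∀ t, 0 ≤ ψ t) →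
      (-∫ t in Set.Ici (0:ℝ), deriv ψ t * E t) + lam * ∫ t in Set.Ici (0:ℝ), ψ t * E t
        ≤ ψ 0 * E 0) :
    ∀ τ, 0 ≤ τ → E τ ≤ Real.exp (-lam * τ) * E 0 := by
  intro τ hτ
  set F : ℝ → ℝ := fun t => Real.exp (lam * t) * E t
  suffices F τ ≤ E 0 by
    calc E τ = Real.exp (-lam * τ) * F τ := by simp [F, ← mul_assoc, ← Real.exp_add]
      _ ≤ Real.exp (-lam * τ) * E 0 := by gcongr
  refine le_of_forall_sub_le fun ε hε => ?_
  have hnear : ∀ᶠ t in 𝓝[≥] τ, F τ - ε ≤ F t := nhdsWithin_le_nhds <|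
    ((by fun_prop : Continuous F).tendsto τ).eventually (eventually_ge_nhds (sub_lt_self _ hε))
  obtain ⟨b, hτb, hFb⟩ := mem_nhdsGE_iff_exists_Icc_subset.1 hnear
  obtain ⟨η, hηC, hη, hη01, hη₁, hη₀⟩ := exists_contDiff_antitone_eq_one_of_le_eq_zero_of_ge hτb
  have hηC1 : ContDiff ℝ 1 η := hηC.of_le (by simp)
  calc F τ - ε ≤ ∫ t in Ici 0, -deriv η t * F t :=
        le_integral_Ici_neg_deriv_mul hτ hηC1 hη hη₁ hη₀ (by fun_prop) hFb
    _ = decayForm lam E (fun t => Real.exp (lam * t) * η t) := (decayForm_exp_mul hEc hηC1 hη₀).symm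
    _ ≤ Real.exp (lam * 0) * η 0 * E 0 :=
        decayForm_le_of_forall_ge_eq_zero (b := b) h (by fun_prop)
          (fun t => mul_nonneg (Real.exp_pos _).le (hη01 t).1) fun t ht => by simp [hη₀ t ht]
    _ = E 0 := by simp [hη₁ 0 hτ]

theorem energy_exponential_decay (E : ℝ → ℝ) (lam : ℝ) (hlam : 0 < lam)
    (hEc : Continuous E) (hEnn : ∀ t, 0 ≤ t → 0 ≤ E t)
    (h : ∀ ψ : ℝ → ℝ, ContDiff ℝ 1 ψ → HasCompactSupport ψ → (∀ t, 0 ≤ ψ t) →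
      (-∫ t in Set.Ici (0:ℝ), deriv ψ t * E t) + lam * ∫ t in Set.Ici (0:ℝ), ψ t * E t
        ≤ ψ 0 * E 0) :
    ∀ τ, 0 ≤ τ → E τ ≤ Real.exp (-lam * τ) * E 0 :=
  energy_exponential_decay_general E lam hEc h
end

section
/- Let S ⊂ ℝ³ be a bounded measurable set of positive measure. Then there exists c > 0 such that for every Y ∈ ℝ³, every skew-symmetric Q ∈ ℝ^{3×3}, and h ∈ ℝ³ being the centroid of S: ∫_S |Y + Q(x − h)|² dx ≥ c·(|Y|² + |Q|²_F), where |Q|_F is the Frobenius norm — provided S is not contained in any line through h. -/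
/-!
The map `(Y, Q) ↦ ∫_S ‖Y + Q (x - h)‖²` is continuous and homogeneous of degree two on the
finite-dimensional space of pairs `(Y, Q)`. It is positive away from `0`: a nonzero affine field
vanishes only on a proper affine subspace, which is Lebesgue-null, while `S` has positive measure.
Its minimum over the unit sphere is therefore a coercivity constant.
-/

open MeasureTheory Set
open scoped RealInnerProductSpace

theorem exists_pos_mul_sq_norm_le_of_homogeneous {V : Type*} [NormedAddCommGroup V]
    [NormedSpace ℝ V] [ProperSpace V] {F : V → ℝ} (hcont : Continuous F)
    (hhom : ∀ (s : ℝ) (p : V), F (s • p) = s ^ 2 * F p) (hpos : ∀ p, p ≠ 0 → 0 < F p) :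
    ∃ c > 0, ∀ p, c * ‖p‖ ^ 2 ≤ F p := by
  have hF0 : F 0 = 0 := by simpa using hhom 0 0
  have hunit : ∀ p : V, p ≠ 0 → ‖p‖⁻¹ • p ∈ Metric.sphere (0 : V) 1 := fun p hp =>
    mem_sphere_zero_iff_norm.2 (norm_smul_inv_norm hp)
  rcases (Metric.sphere (0 : V) 1).eq_empty_or_nonempty with hempty | hne
  · refine ⟨1, one_pos, fun p => ?_⟩
    obtain rfl : p = 0 := by
      by_contra hp
      simpa [hempty] using hunit p hp
    simp [hF0]
  obtain ⟨p₀, hp₀, hmin⟩ := (isCompact_sphere (0 : V) 1).exists_isMinOn hne hcont.continuousOn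
  refine ⟨F p₀, hpos p₀ (ne_zero_of_mem_unit_sphere ⟨p₀, hp₀⟩), fun p => ?_⟩
  rcases eq_or_ne p 0 with rfl | hp
  · simp [hF0]
  calc F p₀ * ‖p‖ ^ 2 ≤ ‖p‖ ^ 2 * F (‖p‖⁻¹ • p) := by
        rw [mul_comm]; exact mul_le_mul_of_nonneg_left (hmin (hunit p hp)) (sq_nonneg _)
    _ = F p := by rw [← hhom, smul_inv_smul₀ (norm_ne_zero_iff.2 hp)]

theorem continuous_setIntegral_of_isBounded {X Y G : Type*} [TopologicalSpace X]
    [FirstCountableTopology X] [LocallyCompactSpace X] [PseudoMetricSpace Y] [ProperSpace Y]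
    [MeasurableSpace Y] [OpensMeasurableSpace Y] [NormedAddCommGroup G] [NormedSpace ℝ G]
    [SecondCountableTopologyEither Y G] (μ : Measure Y) [IsLocallyFiniteMeasure μ]
    {f : X → Y → G} (hf : Continuous f.uncurry) {S : Set Y} (hS : Bornology.IsBounded S) :
    Continuous fun x => ∫ y in S, f x y ∂μ := by
  have := continuous_parametric_integral_of_continuous (μ := μ.restrict S) hf hS.isCompact_closure
  rwa [Measure.restrict_restrict isClosed_closure.measurableSet,
    inter_eq_right.2 subset_closure] at this

theorem addHaar_preimage_singleton_eq_zero {E F : Type*} [NormedAddCommGroup E]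
    [NormedSpace ℝ E] [MeasurableSpace E] [BorelSpace E] [FiniteDimensional ℝ E]
    [AddCommGroup F] [Module ℝ F] (μ : Measure E) [μ.IsAddHaarMeasure]
    {Q : E →ₗ[ℝ] F} (hQ : Q ≠ 0) (y : F) : μ (Q ⁻¹' {y}) = 0 := by
  rcases (Q ⁻¹' {y}).eq_empty_or_nonempty with hempty | ⟨x₀, hx₀⟩
  · simp [hempty]
  refine measure_mono_null (fun x hx => ?_)
    (Measure.addHaar_affineSubspace μ (AffineSubspace.mk' x₀ (LinearMap.ker Q)) fun htop => ?_)
  · simp_all [AffineSubspace.mem_mk']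
  · have := congrArg AffineSubspace.direction htop
    rw [AffineSubspace.direction_mk', AffineSubspace.direction_top] at this
    exact hQ (LinearMap.ker_eq_top.1 this)

section KineticEnergy

variable {E : Type*} [NormedAddCommGroup E] [NormedSpace ℝ E] [MeasurableSpace E]
  (μ : Measure E) (S : Set E) (h : E)

/-- Twice the kinetic energy of the velocity field `x ↦ Y + Q (x - h)` of a body of unit density
occupying `S`. -/
noncomputable def kineticEnergy (p : E × (E →L[ℝ] E)) : ℝ :=
  ∫ x in S, ‖p.1 + p.2 (x - h)‖ ^ 2 ∂μ

theorem kineticEnergy_smul (s : ℝ) (p : E × (E →L[ℝ] E)) :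
    kineticEnergy μ S h (s • p) = s ^ 2 * kineticEnergy μ S h p := by
  simp only [kineticEnergy, Prod.smul_fst, Prod.smul_snd, smul_apply,
    ← smul_add, norm_smul, mul_pow, Real.norm_eq_abs, sq_abs]
  exact integral_const_mul _ _

variable [BorelSpace E] [FiniteDimensional ℝ E] {S}

theorem continuous_kineticEnergy [IsLocallyFiniteMeasure μ] (hS : Bornology.IsBounded S) :
    Continuous (kineticEnergy μ S h) :=
  continuous_setIntegral_of_isBounded μ (by fun_prop) hS

theorem addHaar_setOf_add_apply_sub_eq_zero [μ.IsAddHaarMeasure] {p : E × (E →L[ℝ] E)}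
    (hp : p ≠ 0) : μ {x | p.1 + p.2 (x - h) = 0} = 0 := by
  rcases eq_or_ne p.2 0 with hQ | hQ
  · have hY : p.1 ≠ 0 := fun hY => hp (Prod.ext hY hQ)
    simp [hQ, hY]
  have hQ' : (p.2 : E →ₗ[ℝ] E) ≠ 0 := by
    simpa [← ContinuousLinearMap.toLinearMap_zero, ContinuousLinearMap.coe_inj] using hQ
  refine measure_mono_null (fun x hx => ?_)
    (addHaar_preimage_singleton_eq_zero μ hQ' (p.2 h - p.1))
  simp only [mem_ofPred_eq, map_sub] at hx
  simp only [mem_preimage, ContinuousLinearMap.coe_coe, mem_singleton_iff]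
  rw [← sub_eq_zero, ← hx]
  abel

theorem kineticEnergy_pos [μ.IsAddHaarMeasure] (hS : Bornology.IsBounded S) (hSμ : μ S ≠ 0)
    {p : E × (E →L[ℝ] E)} (hp : p ≠ 0) : 0 < kineticEnergy μ S h p := by
  set g : E → ℝ := fun x => ‖p.1 + p.2 (x - h)‖ ^ 2
  have hg : Continuous g := by fun_prop
  have hint : IntegrableOn g S μ :=
    (hg.continuousOn.integrableOn_compact hS.isCompact_closure).mono_set subset_closure
  have hnull : μ (Function.support g)ᶜ = 0 := by
    simpa [g, Function.compl_support] using addHaar_setOf_add_apply_sub_eq_zero μ h hp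
  rw [kineticEnergy, integral_pos_iff_support_of_nonneg (fun x => by positivity) hint,
    Measure.restrict_apply hg.isOpen_support.measurableSet, inter_comm,
    measure_inter_conull hnull]
  exact pos_iff_ne_zero.2 hSμ

end KineticEnergy

theorem rigid_velocity_coercivity_general
    (S : Set (EuclideanSpace ℝ (Fin 3)))
    (hSb : Bornology.IsBounded S) (hpos : 0 < volume S)
    (h : EuclideanSpace ℝ (Fin 3)) :
    ∃ c > 0, ∀ (Y : EuclideanSpace ℝ (Fin 3))
      (Q : EuclideanSpace ℝ (Fin 3) →L[ℝ] EuclideanSpace ℝ (Fin 3)),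
      (∀ v w : EuclideanSpace ℝ (Fin 3), ⟪Q v, w⟫ = -⟪v, Q w⟫) →
      c * (‖Y‖ ^ 2 + ‖Q‖ ^ 2) ≤ ∫ x in S, ‖Y + Q (x - h)‖ ^ 2 := by
  obtain ⟨c, hc, hcoercive⟩ := exists_pos_mul_sq_norm_le_of_homogeneous
    (continuous_kineticEnergy volume h hSb) (kineticEnergy_smul volume S h)
    fun _ => kineticEnergy_pos volume h hSb hpos.ne'
  refine ⟨c / 2, half_pos hc, fun Y Q _ => ?_⟩
  have hnorm : ‖Y‖ ^ 2 + ‖Q‖ ^ 2 ≤ 2 * ‖(Y, Q)‖ ^ 2 := by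
    rw [Prod.norm_def]
    nlinarith [le_max_left ‖Y‖ ‖Q‖, le_max_right ‖Y‖ ‖Q‖, norm_nonneg Y, norm_nonneg Q]
  calc c / 2 * (‖Y‖ ^ 2 + ‖Q‖ ^ 2) ≤ c * ‖(Y, Q)‖ ^ 2 := by nlinarith
    _ ≤ kineticEnergy volume S h (Y, Q) := hcoercive (Y, Q)

theorem rigid_velocity_coercivity
    (S : Set (EuclideanSpace ℝ (Fin 3))) (hSm : MeasurableSet S)
    (hSb : Bornology.IsBounded S) (hpos : 0 < volume S)
    (h : EuclideanSpace ℝ (Fin 3))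
    (hcent : h = (volume S).toReal⁻¹ • ∫ x in S, x)
    (hline : ¬ ∃ v : EuclideanSpace ℝ (Fin 3), ∀ x ∈ S, ∃ t : ℝ, x - h = t • v) :
    ∃ c > 0, ∀ (Y : EuclideanSpace ℝ (Fin 3))
      (Q : EuclideanSpace ℝ (Fin 3) →L[ℝ] EuclideanSpace ℝ (Fin 3)),
      (∀ v w : EuclideanSpace ℝ (Fin 3), ⟪Q v, w⟫ = -⟪v, Q w⟫) →
      c * (‖Y‖ ^ 2 + ‖Q‖ ^ 2) ≤ ∫ x in S, ‖Y + Q (x - h)‖ ^ 2 :=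
  rigid_velocity_coercivity_general S hSb hpos h
end
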